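/- arXiv:2509.04158 — 5 statements merged into one kernel-verified Lean document; each statement's English description precedes it below -/
import Mathlib

section
/- The polynomials p_n(x) = x H_n'(x) - H_n(x) satisfy, for all n ≥ 1, the three-term recursion in the degree variable: (n(n-1)/2) p_{n-2}(x) + ((2n-1)/4) p_n(x) + ((n-1)/(8(n+1))) p_{n+2}(x) = (x²/2) p_n(x), with the convention p_{-1} = 0. -/
/-! From `H_n' = 2n H_{n-1}` and the three-term recurrence, `p_n = (n-1) H_n + 2n(n-1) H_{n-2}`,
and multiplication by `x²` acts on the Hermite basis by
`x² H_k = H_{k+2}/4 + (2k+1)/2 H_k + k(k-1) H_{k-2}`. Both sides of the recursion thus become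
combinations of `H_{n-4}, H_{n-2}, H_n, H_{n+2}`, whose coefficients agree. -/

open Polynomial

/-- The physicists' Hermite polynomials, via `H_{n+1} = 2x H_n - H_n'`. -/
noncomputable def physHermite : ℕ → Polynomial ℝ
  | 0 => 1
  | n + 1 => C 2 * X * physHermite n - derivative (physHermite n)

/-- `p_k = x H_k' - H_k` for `k ≥ 0`, with `p_k = 0` for negative indices. -/
noncomputable def pGap (k : ℤ) : Polynomial ℝ :=
  if 0 ≤ k then X * derivative (physHermite k.toNat) - physHermite k.toNat else 0

theorem derivative_physHermite_succ (n : ℕ) :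
    derivative (physHermite (n + 1)) = C (2 * ((n : ℝ) + 1)) * physHermite n := by
  induction n with
  | zero => simp [physHermite]
  | succ k ih =>
    rw [physHermite, derivative_sub, derivative_mul, derivative_mul, ih, derivative_C_mul]
    simp only [physHermite, derivative_C, derivative_X, C_mul', smul_mul_assoc, mul_smul_comm,
      zero_mul, zero_add, mul_one, smul_sub]
    push_cast
    module

theorem physHermite_succ_succ (n : ℕ) :
    physHermite (n + 2) =
      C 2 * X * physHermite (n + 1) - C (2 * ((n : ℝ) + 1)) * physHermite n := by
  rw [physHermite, derivative_physHermite_succ]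

-- The truncated indices `n - 1`, `n - 2` below only truncate where their coefficient vanishes.
theorem X_mul_physHermite (n : ℕ) :
    X * physHermite n = C (1 / 2) * physHermite (n + 1) + C (n : ℝ) * physHermite (n - 1) := by
  cases n with
  | zero => simp [physHermite, C_mul']
  | succ k =>
    rw [physHermite_succ_succ, Nat.add_sub_cancel]
    simp only [C_mul', smul_mul_assoc, smul_sub]
    push_cast
    module

theorem X_sq_mul_physHermite (n : ℕ) :
    X ^ 2 * physHermite n = C (1 / 4) * physHermite (n + 2)
      + C ((2 * (n : ℝ) + 1) / 2) * physHermite n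
      + C ((n : ℝ) * ((n : ℝ) - 1)) * physHermite (n - 2) := by
  rw [pow_two, mul_assoc, X_mul_physHermite, mul_add, mul_left_comm, mul_left_comm X,
    X_mul_physHermite, X_mul_physHermite]
  cases n with
  | zero => simp only [C_mul', smul_add]; push_cast; module
  | succ k =>
    rw [Nat.add_sub_cancel, Nat.sub_sub, Nat.sub_add_cancel (by omega)]
    simp only [C_mul', smul_add]
    push_cast
    module

theorem pGap_natCast (n : ℕ) :
    pGap n = C ((n : ℝ) - 1) * physHermite n
      + C (2 * (n : ℝ) * ((n : ℝ) - 1)) * physHermite (n - 2) := by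
  rw [pGap, if_pos (Int.natCast_nonneg n), Int.toNat_natCast]
  cases n with
  | zero => simp [physHermite]
  | succ k =>
    rw [derivative_physHermite_succ, mul_left_comm, X_mul_physHermite,
      show k + 1 - 2 = k - 1 by omega]
    simp only [C_mul', smul_add]
    push_cast
    module

theorem one_gap_recursion_general (n : ℕ) :
    C ((n : ℝ) * ((n : ℝ) - 1) / 2) * pGap ((n : ℤ) - 2)
      + C ((2 * (n : ℝ) - 1) / 4) * pGap (n : ℤ)
      + C (((n : ℝ) - 1) / (8 * ((n : ℝ) + 1))) * pGap ((n : ℤ) + 2) =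
    C (1 / 2) * X ^ 2 * pGap (n : ℤ) := by
  have hadd : (n : ℤ) + 2 = (n + 2 : ℕ) := by push_cast; rfl
  rw [hadd, pGap_natCast, pGap_natCast]
  rcases lt_or_ge n 2 with hn | hn
  · interval_cases n <;>
    · simp only [C_mul', mul_add, smul_add, mul_smul_comm, smul_mul_assoc, X_sq_mul_physHermite]
      push_cast
      module
  obtain ⟨m, rfl⟩ := Nat.exists_eq_add_of_le' hn
  have hsub : ((m + 2 : ℕ) : ℤ) - 2 = m := by omega
  rw [hsub, pGap_natCast]
  simp only [C_mul', mul_add, smul_add, mul_smul_comm, smul_mul_assoc, X_sq_mul_physHermite,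
    Nat.add_sub_cancel]
  push_cast
  match_scalars <;> field_simp <;> ring

/-- The three-term recursion in the degree variable:
`(n(n-1)/2) p_{n-2} + ((2n-1)/4) p_n + ((n-1)/(8(n+1))) p_{n+2} = (x²/2) p_n` for `n ≥ 1`. -/
theorem one_gap_recursion (n : ℕ) (hn : 1 ≤ n) :
    C ((n : ℝ) * ((n : ℝ) - 1) / 2) * pGap ((n : ℤ) - 2)
      + C ((2 * (n : ℝ) - 1) / 4) * pGap (n : ℤ)
      + C (((n : ℝ) - 1) / (8 * ((n : ℝ) + 1))) * pGap ((n : ℤ) + 2) =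
    C (1 / 2) * X ^ 2 * pGap (n : ℤ) :=
  one_gap_recursion_general n
end

section
/- Conjugation of the two-gap operator: for every twice-differentiable f : ℝ → ℝ and every x with 2x² ≠ 1, with h(x) = e^{x²/2}(2x² - 1) and g = h·f, one has (1/h(x))·[ g''(x) - (2(2x³+3x)/(2x²-1)) g'(x) + (8/(2x²-1)) g(x) ] = f''(x) - x² f(x) - 3 f(x) + 2·(d²/dx²)(log(2x²-1))·f(x). -/
/-!
With `h = e^{x²/2}(2x²-1)` one has `h' = e^{x²/2}(2x³+3x)`, so `2h'/h` is exactly the first-order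
coefficient of `L̃`: conjugating by `h` removes the `f'` term, and the zeroth-order coefficient
`(h'' - (2h'/h) h' + 8h/(2x²-1)) / h` is a rational function of `x` equal to
`-x² - 3 + 2 (log(2x²-1))''`.
-/

open Real

theorem deriv_deriv_mul {h h' f : ℝ → ℝ} {h'' x : ℝ} (hh : ∀ y, HasDerivAt h (h' y) y)
    (hh' : HasDerivAt h' h'' x) (hf : Differentiable ℝ f) (hf' : DifferentiableAt ℝ (deriv f) x) :
    deriv (deriv fun y => h y * f y) x =
      h'' * f x + 2 * h' x * deriv f x + h x * deriv (deriv f) x := by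
  have hderiv : deriv (fun y => h y * f y) = fun y => h' y * f y + h y * deriv f y :=
    funext fun y => ((hh y).mul (hf y).hasDerivAt).deriv
  rw [hderiv]
  exact ((hh'.mul (hf x).hasDerivAt).add ((hh x).mul hf'.hasDerivAt)).deriv.trans (by ring)

theorem hasDerivAt_exp_sq_half_mul {p p' : ℝ → ℝ} {x : ℝ} (hp : HasDerivAt p (p' x) x) :
    HasDerivAt (fun y => exp (y ^ 2 / 2) * p y) (exp (x ^ 2 / 2) * (x * p x + p' x)) x := by
  have hsq : HasDerivAt (fun y : ℝ => y ^ 2 / 2) x x := by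
    simpa using (hasDerivAt_pow 2 x).div_const 2
  exact (hsq.exp.mul hp).congr_deriv (by ring)

theorem hasDerivAt_twoGapWeight (x : ℝ) :
    HasDerivAt (fun y => exp (y ^ 2 / 2) * (2 * y ^ 2 - 1))
      (exp (x ^ 2 / 2) * (2 * x ^ 3 + 3 * x)) x := by
  have hp : HasDerivAt (fun y : ℝ => 2 * y ^ 2 - 1) (4 * x) x :=
    (((hasDerivAt_pow 2 x).const_mul 2).sub_const 1).congr_deriv (by ring)
  exact (hasDerivAt_exp_sq_half_mul (p' := fun y => 4 * y) hp).congr_deriv (by ring)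

theorem hasDerivAt_deriv_twoGapWeight (x : ℝ) :
    HasDerivAt (fun y => exp (y ^ 2 / 2) * (2 * y ^ 3 + 3 * y))
      (exp (x ^ 2 / 2) * (2 * x ^ 4 + 9 * x ^ 2 + 3)) x := by
  have hp : HasDerivAt (fun y : ℝ => 2 * y ^ 3 + 3 * y) (6 * x ^ 2 + 3) x :=
    (((hasDerivAt_pow 3 x).const_mul 2).add ((hasDerivAt_id' x).const_mul 3)).congr_deriv
      (by ring)
  exact (hasDerivAt_exp_sq_half_mul (p' := fun y => 6 * y ^ 2 + 3) hp).congr_deriv (by ring)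

/-- Conjugation of the two-gap operator by `h(x) = e^{x²/2}(2x²-1)`:
`h⁻¹ ∘ L̃ ∘ h = ∂² - x² - 3 + 2 (log(2x²-1))''` pointwise for `2x² ≠ 1`,
where `(log(2x²-1))'' = -4(2x²+1)/(2x²-1)²`. -/
theorem two_gap_conjugation (f : ℝ → ℝ)
    (hf : Differentiable ℝ f) (hf' : Differentiable ℝ (deriv f)) :
    ∀ x : ℝ, 2 * x ^ 2 ≠ 1 →
      (1 / (Real.exp (x ^ 2 / 2) * (2 * x ^ 2 - 1))) *
          ((fun g : ℝ → ℝ =>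
              deriv (deriv g) x - (2 * (2 * x ^ 3 + 3 * x) / (2 * x ^ 2 - 1)) * deriv g x
                + (8 / (2 * x ^ 2 - 1)) * g x)
            (fun y => Real.exp (y ^ 2 / 2) * (2 * y ^ 2 - 1) * f y)) =
        deriv (deriv f) x - x ^ 2 * f x - 3 * f x
          + 2 * (-4 * (2 * x ^ 2 + 1) / (2 * x ^ 2 - 1) ^ 2) * f x := by
  intro x hx
  have hx' : x ^ 2 * 2 - 1 ≠ 0 := by rw [mul_comm]; exact sub_ne_zero.mpr hx
  have hfirst : deriv (fun y => exp (y ^ 2 / 2) * (2 * y ^ 2 - 1) * f y) x =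
      exp (x ^ 2 / 2) * (2 * x ^ 3 + 3 * x) * f x + exp (x ^ 2 / 2) * (2 * x ^ 2 - 1) * deriv f x :=
    ((hasDerivAt_twoGapWeight x).mul (hf x).hasDerivAt).deriv
  have hsecond := deriv_deriv_mul hasDerivAt_twoGapWeight (hasDerivAt_deriv_twoGapWeight x) hf
    (hf' x)
  simp only at hsecond ⊢
  rw [hfirst, hsecond]
  field_simp
  ring
end

section
/- The Hermite operator and multiplication by x satisfy the third-order ad-condition: (ad H)³(x) − 4 (ad H)(x) = 0 as differential operators, where H = ∂² − 2x∂ and x denotes the multiplication operator. -/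
/-!
Only the relation `⁅∂, x⁆ = 1` matters. By the Leibniz rule it gives `⁅H, ∂⁆ = 2∂` and
`⁅H, x⁆ = 2(∂ - x)`, so `ad H` preserves the span of `∂` and `x`, and there
`(ad H)² x = 2(2∂ - 2(∂ - x)) = 4x`; one more application of `ad H` gives the claim.
-/

open Polynomial

namespace AdHermite

/-- The derivative `∂` as an endomorphism of `ℝ[x]`. -/
noncomputable def D : Module.End ℝ (Polynomial ℝ) := derivative

/-- Multiplication by `x` as an endomorphism of `ℝ[x]`. -/
noncomputable def Θ : Module.End ℝ (Polynomial ℝ) := LinearMap.mulLeft ℝ (X : Polynomial ℝ)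

/-- The Hermite operator `H = ∂² - 2x∂` as an endomorphism of `ℝ[x]`. -/
noncomputable def H : Module.End ℝ (Polynomial ℝ) := D * D - 2 • (Θ * D)

/-- The commutator `ad X (Y) = XY - YX`. -/
noncomputable def ad (A B : Module.End ℝ (Polynomial ℝ)) : Module.End ℝ (Polynomial ℝ) := A * B - B * A

section CanonicalCommutation

attribute [local instance] LieRing.ofAssociativeRing

variable {A : Type*} [Ring A]

theorem mul_lie (a b c : A) : ⁅a * b, c⁆ = a * ⁅b, c⁆ + ⁅a, c⁆ * b := by
  simp only [Ring.lie_def]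
  noncomm_ring

def hermite (d x : A) : A := d * d - 2 • (x * d)

variable {d x : A}

theorem hermite_lie_d (hdx : ⁅d, x⁆ = 1) : ⁅hermite d x, d⁆ = 2 • d := by
  have hxd : ⁅x, d⁆ = -1 := by rw [← lie_skew, hdx]
  rw [hermite, sub_lie, nsmul_lie, mul_lie, mul_lie, lie_self, hxd]
  simp only [mul_zero, zero_mul, add_zero, neg_one_mul, smul_neg, sub_neg_eq_add, zero_add]

theorem hermite_lie_x (hdx : ⁅d, x⁆ = 1) : ⁅hermite d x, x⁆ = 2 • (d - x) := by
  rw [hermite, sub_lie, nsmul_lie, mul_lie, mul_lie, lie_self, hdx]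
  simp only [mul_one, one_mul, zero_mul, add_zero, smul_sub, two_nsmul]

theorem hermite_lie_hermite_lie_x (hdx : ⁅d, x⁆ = 1) :
    ⁅hermite d x, ⁅hermite d x, x⁆⁆ = 4 • x := by
  rw [hermite_lie_x hdx, lie_nsmul, lie_sub, hermite_lie_d hdx, hermite_lie_x hdx]
  module

theorem hermite_lie_hermite_lie_hermite_lie_x (hdx : ⁅d, x⁆ = 1) :
    ⁅hermite d x, ⁅hermite d x, ⁅hermite d x, x⁆⁆⁆ = 4 • ⁅hermite d x, x⁆ := by
  rw [hermite_lie_hermite_lie_x hdx, lie_nsmul]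

end CanonicalCommutation

theorem lie_D_Θ : ⁅D, Θ⁆ = 1 := by
  refine LinearMap.ext fun p => ?_
  simp [Ring.lie_def, D, Θ, derivative_mul]

/-- The ad-condition for the Hermite operator: `(ad H)³(x) - 4 (ad H)(x) = 0`. -/
theorem hermite_ad_condition : ad H (ad H (ad H Θ)) - 4 • ad H Θ = 0 := by
  have ad_eq_lie (a b : Module.End ℝ ℝ[X]) : ad a b = ⁅a, b⁆ := (Ring.lie_def a b).symm
  have H_eq_hermite : H = hermite D Θ := rfl
  rw [ad_eq_lie, ad_eq_lie, ad_eq_lie, H_eq_hermite,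
    hermite_lie_hermite_lie_hermite_lie_x lie_D_Θ, sub_self]

end AdHermite
end

section
/- The Hermite polynomials decompose into the functions ξ_n: H_n(x) = i^n 2^{n−1} n! ((−1)^n ξ_n(−ix) + ξ_n(ix)), where ξ_n(x) = Σ_{m=0}^{n} (−x)^m / (2^{n−m} m! Γ(1 + (n−m)/2)) + Σ_{j=0}^{∞} (−x)^{n+2j+1} 2^{2j+1} / ((n+2j+1)! Γ(1/2 − j)). -/
/-!
The tails of `(-1)^n ξ_n(-z)` and `ξ_n(z)` differ exactly by a sign, so they cancel and only the
finite sums survive. There the `m`-th terms cancel when `n + m` is odd, and for `n = 2j + m` they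
give, using `Γ(1 + j) = j!`, the classical coefficient `(-1)^j n! 2^m / (j! m!)` of `x^m` in `H_n`.
That coefficient comes from Mathlib's probabilists' polynomials `He_n` via
`H_n(x) = 2^{n/2} He_n(√2 x)`, i.e. `coeff H_n k = 2^{(n+k)/2} coeff He_n k`.
-/

open Polynomial Complex

/-- The entire functions
`ξ_n(z) = Σ_{m=0}^{n} (-z)^m / (2^{n-m} m! Γ(1+(n-m)/2))
        + Σ_{j≥0} (-z)^{n+2j+1} 2^{2j+1} / ((n+2j+1)! Γ(1/2-j))`. -/
noncomputable def ξ (n : ℕ) (z : ℂ) : ℂ :=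
  (∑ m ∈ Finset.range (n + 1),
      (-z) ^ m / (2 ^ (n - m) * (Nat.factorial m) * Complex.Gamma (1 + ((n : ℂ) - m) / 2)))
    + ∑' j : ℕ,
      (-z) ^ (n + 2 * j + 1) * 2 ^ (2 * j + 1) /
        ((Nat.factorial (n + 2 * j + 1)) * Complex.Gamma (1 / 2 - (j : ℂ)))

open Finset
open scoped Nat

lemma coeff_physHermite_succ_zero (n : ℕ) :
    coeff (physHermite (n + 1)) 0 = -coeff (physHermite n) 1 := by
  simp [physHermite, coeff_derivative]

lemma coeff_physHermite_succ_succ (n k : ℕ) :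
    coeff (physHermite (n + 1)) (k + 1) =
      2 * coeff (physHermite n) k - (k + 2) * coeff (physHermite n) (k + 2) := by
  rw [physHermite, coeff_sub, mul_assoc, coeff_C_mul, coeff_X_mul, coeff_derivative]
  push_cast
  ring

lemma coeff_physHermite_eq_two_pow_mul_coeff_hermite (n k : ℕ) :
    coeff (physHermite n) k = 2 ^ ((n + k) / 2) * ((hermite n).coeff k : ℝ) := by
  induction n generalizing k with
  | zero => cases k <;> simp [physHermite, coeff_one]
  | succ n ih =>
    cases k with
    | zero =>
      rw [coeff_physHermite_succ_zero, ih, coeff_hermite_succ_zero]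
      push_cast
      ring
    | succ k =>
      rw [coeff_physHermite_succ_succ, ih, ih, coeff_hermite_succ_succ,
        show (n + 1 + (k + 1)) / 2 = (n + k) / 2 + 1 by omega,
        show (n + (k + 2)) / 2 = (n + k) / 2 + 1 by omega]
      push_cast
      ring

lemma natDegree_physHermite_le (n : ℕ) : (physHermite n).natDegree ≤ n :=
  natDegree_le_iff_coeff_eq_zero.2 fun k hk => by
    rw [coeff_physHermite_eq_two_pow_mul_coeff_hermite, coeff_hermite_of_lt hk, Int.cast_zero,
      mul_zero]

lemma coeff_physHermite_of_odd_add {n k : ℕ} (h : Odd (n + k)) : coeff (physHermite n) k = 0 := by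
  rw [coeff_physHermite_eq_two_pow_mul_coeff_hermite, coeff_hermite_of_odd_add h, Int.cast_zero,
    mul_zero]

lemma Nat.factorial_two_mul (n : ℕ) : (2 * n)! = 2 ^ n * n ! * (2 * n - 1)‼ := by
  cases n with
  | zero => rfl
  | succ n =>
    rw [← Nat.doubleFactorial_two_mul, show 2 * (n + 1) = 2 * n + 1 + 1 by ring,
      Nat.factorial_eq_mul_doubleFactorial, Nat.add_sub_cancel]

lemma coeff_physHermite_explicit (n k : ℕ) :
    coeff (physHermite (2 * n + k)) k = (-1) ^ n * (2 * n + k)! / (n ! * k !) * 2 ^ k := by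
  have hfac : ((2 * n + k)! : ℝ) = (2 * n)! * k ! * (2 * n + k).choose k := by
    exact_mod_cast (Nat.add_choose_mul_factorial_mul_factorial (2 * n) k).symm.trans (by ring)
  rw [coeff_physHermite_eq_two_pow_mul_coeff_hermite, coeff_hermite_explicit,
    show (2 * n + k + k) / 2 = n + k by omega, hfac, Nat.factorial_two_mul]
  push_cast
  field_simp
  ring

lemma neg_one_pow_add_neg_one_pow_of_odd_add {R : Type*} [Ring R] {n m : ℕ} (h : Odd (n + m)) :
    (-1 : R) ^ n + (-1) ^ m = 0 := by
  rcases Nat.even_or_odd m with hm | hm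
  · rw [(Nat.odd_add.1 h).2 hm |>.neg_one_pow, hm.neg_one_pow, neg_add_cancel]
  · rw [(Nat.odd_add'.1 h).1 hm |>.neg_one_pow, hm.neg_one_pow, add_neg_cancel]

lemma neg_one_pow_mul_ξ_neg_add_ξ (n : ℕ) (z : ℂ) :
    (-1) ^ n * ξ n (-z) + ξ n z = ∑ m ∈ range (n + 1),
      ((-1) ^ n + (-1) ^ m) * z ^ m / (2 ^ (n - m) * m ! * Gamma (1 + ((n : ℂ) - m) / 2)) := by
  have htail : (-1) ^ n * ∑' j : ℕ, (-(-z)) ^ (n + 2 * j + 1) * 2 ^ (2 * j + 1) /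
        ((n + 2 * j + 1)! * Gamma (1 / 2 - (j : ℂ))) =
      -∑' j : ℕ, (-z) ^ (n + 2 * j + 1) * 2 ^ (2 * j + 1) /
        ((n + 2 * j + 1)! * Gamma (1 / 2 - (j : ℂ))) := by
    rw [← tsum_mul_left, ← tsum_neg]
    refine tsum_congr fun j => ?_
    rw [neg_neg, neg_pow z, pow_succ (-1 : ℂ), pow_add (-1 : ℂ), (even_two_mul j).neg_one_pow]
    ring
  rw [ξ, ξ, mul_add, add_add_add_comm, htail, neg_add_cancel, add_zero, mul_sum,
    ← sum_add_distrib]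
  refine sum_congr rfl fun m _ => ?_
  rw [neg_neg, neg_pow z]
  ring

lemma Gamma_one_add_half_sub (j m : ℕ) : Gamma (1 + (((2 * j + m : ℕ) : ℂ) - m) / 2) = j ! := by
  rw [← Gamma_nat_eq_factorial]
  push_cast
  ring_nf

lemma coeff_physHermite_smul_pow_eq {n m : ℕ} (hm : m ≤ n) (x : ℝ) :
    coeff (physHermite n) m • (x : ℂ) ^ m = I ^ n * 2 ^ ((n : ℤ) - 1) * n ! *
      (((-1) ^ n + (-1) ^ m) * (I * x) ^ m /
        (2 ^ (n - m) * m ! * Gamma (1 + ((n : ℂ) - m) / 2))) := by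
  rcases Nat.even_or_odd (n + m) with heven | hodd
  · obtain ⟨j, rfl⟩ : ∃ j, n = 2 * j + m := by
      obtain ⟨t, ht⟩ := heven
      exact ⟨t - m, by omega⟩
    have hsign : (-1 : ℂ) ^ (2 * j + m) + (-1) ^ m = 2 * (-1) ^ m := by
      rw [pow_add, (even_two_mul j).neg_one_pow]
      ring
    have hI : I ^ (2 * j + m) * (I * x) ^ m * (-1) ^ m = (-1) ^ j * x ^ m := by
      rw [mul_pow, ← mul_assoc, ← pow_add, show 2 * j + m + m = 2 * (j + m) by ring, pow_mul,
        I_sq, pow_add, mul_right_comm, mul_assoc ((-1) ^ j), ← mul_pow, neg_one_mul, neg_neg,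
        one_pow, mul_one]
    rw [coeff_physHermite_explicit, Gamma_one_add_half_sub, Nat.add_sub_cancel, real_smul,
      zpow_sub₀ two_ne_zero, zpow_one, zpow_natCast, hsign]
    calc _ = (-1) ^ j * (x : ℂ) ^ m * ((2 * j + m)! / (j ! * m !) * 2 ^ m) := by push_cast; ring
      _ = I ^ (2 * j + m) * (I * x) ^ m * (-1) ^ m * ((2 * j + m)! / (j ! * m !) * 2 ^ m) := by
        rw [hI]
      _ = _ := by rw [pow_add 2]; field_simp
  · rw [coeff_physHermite_of_odd_add hodd, neg_one_pow_add_neg_one_pow_of_odd_add hodd]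
    simp

/-- `H_n(x) = i^n 2^{n-1} n! ((-1)^n ξ_n(-ix) + ξ_n(ix))` for all real `x`. -/
theorem hermite_xi_decomposition (n : ℕ) (x : ℝ) :
    Polynomial.aeval (x : ℂ) (physHermite n) =
      Complex.I ^ n * (2 : ℂ) ^ ((n : ℤ) - 1) * (Nat.factorial n) *
        ((-1) ^ n * ξ n (-(Complex.I * x)) + ξ n (Complex.I * x)) := by
  rw [aeval_eq_sum_range' (Nat.lt_succ_of_le (natDegree_physHermite_le n)),
    neg_one_pow_mul_ξ_neg_add_ξ, mul_sum]
  exact sum_congr rfl fun m hm =>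
    coeff_physHermite_smul_pow_eq (Nat.lt_succ_iff.1 (mem_range.1 hm)) x
end

section
/- The lowering identity (x d/dx − 1) ₁F₁(−n/2; 1/2; x²) = − ₁F₁(−n/2; −1/2; x²) holds for all natural numbers n and all real x. -/
open Polynomial

/-- The confluent hypergeometric function `₁F₁(a; b; z) = Σ_k (a)_k z^k / ((b)_k k!)`. -/
noncomputable def oneFOne (a b z : ℝ) : ℝ :=
  ∑' k : ℕ, (ascPochhammer ℝ k).eval a * z ^ k / ((ascPochhammer ℝ k).eval b * (Nat.factorial k))

/-!
Write `₁F₁(a; 1/2; x²) = Σ c_k x^{2k}`. The operator `x d/dx - 1` multiplies the `k`-th term by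
`2k - 1`, and the contiguity relation `(1/2)_k = -(2k - 1) (-1/2)_k` turns `(2k - 1) c_k` into minus
the `k`-th coefficient of `₁F₁(a; -1/2; x²)`. Termwise differentiation is justified by the bound
`|c_k| ≤ M^k / k!`, which makes the series entire.
-/

open scoped Nat

section PowerSeries

variable {c : ℕ → ℝ} {M : ℝ}

theorem summable_mul_pow_of_abs_le (hc : ∀ k, |c k| ≤ M ^ k / k !) (z : ℝ) :
    Summable fun k => c k * z ^ k := by
  refine .of_norm_bounded (Real.summable_pow_div_factorial (M * |z|)) fun k => ?_
  rw [Real.norm_eq_abs, abs_mul, abs_pow, mul_pow, mul_div_right_comm]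
  gcongr
  exact hc k

theorem hasDerivAt_tsum_mul_pow (hc : ∀ k, |c k| ≤ M ^ k / k !) (z : ℝ) :
    HasDerivAt (fun w => ∑' k, c k * w ^ k) (∑' k, c k * (k * z ^ (k - 1))) z := by
  have hM : 0 ≤ M := by simpa using (abs_nonneg _).trans (hc 1)
  obtain ⟨R, hzR⟩ : ∃ R, |z| < R := ⟨|z| + 1, lt_add_one _⟩
  have hu : Summable fun k => M ^ k * (k * R ^ (k - 1)) / k ! := by
    refine (summable_nat_add_iff 1).mp ?_
    refine ((Real.summable_pow_div_factorial (M * R)).mul_left M).congr fun k => ?_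
    rw [Nat.factorial_succ]
    push_cast
    field_simp
    ring
  refine hasDerivAt_tsum_of_isPreconnected hu Metric.isOpen_ball
    (convex_ball (0 : ℝ) R).isPreconnected (fun k w _ => (hasDerivAt_pow k w).const_mul (c k))
    (fun k w hw => ?_) (Metric.mem_ball_self ((abs_nonneg z).trans_lt hzR))
    (summable_mul_pow_of_abs_le hc 0) (by simpa using hzR)
  have hwR : |w| ≤ R := by simpa using (Metric.mem_ball.mp hw).le
  rw [Real.norm_eq_abs, abs_mul, abs_mul, abs_pow, Nat.abs_cast, mul_div_right_comm]
  gcongr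
  exact hc k

theorem abs_natCast_mul_le (hc : ∀ k, |c k| ≤ M ^ k / k !) (k : ℕ) :
    |k * c k| ≤ (2 * M) ^ k / k ! := by
  have hk : (k : ℝ) ≤ 2 ^ k := by exact_mod_cast (Nat.lt_two_pow_self).le
  rw [abs_mul, Nat.abs_cast, mul_pow, mul_div_assoc]
  exact mul_le_mul hk (hc k) (abs_nonneg _) (by positivity)

theorem mul_tsum_mul_natCast_mul_pow_sub_one (c : ℕ → ℝ) (z : ℝ) :
    z * ∑' k, c k * (k * z ^ (k - 1)) = ∑' k, k * c k * z ^ k := by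
  rw [← tsum_mul_left]
  refine tsum_congr fun k => ?_
  rcases k with _ | k
  · simp
  · rw [Nat.add_sub_cancel, pow_succ]
    ring

end PowerSeries

theorem ascPochhammer_eval_mul_eval_add_one {R : Type*} [CommSemiring R] (b : R) (k : ℕ) :
    b * (ascPochhammer R k).eval (b + 1) = (ascPochhammer R k).eval b * (b + k) := by
  rw [← ascPochhammer_succ_eval, ascPochhammer_succ_left]
  simp

theorem abs_ascPochhammer_eval_le (a : ℝ) (k : ℕ) :
    |(ascPochhammer ℝ k).eval a| ≤ (|a| + 1) ^ k * k ! := by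
  induction k with
  | zero => simp
  | succ k ih =>
    have hstep : |a + k| ≤ (|a| + 1) * (k + 1) := by
      nlinarith [abs_add_le a k, abs_nonneg a, Nat.abs_cast (R := ℝ) k, k.cast_nonneg (α := ℝ)]
    rw [ascPochhammer_succ_eval, abs_mul, Nat.factorial_succ]
    push_cast
    calc |(ascPochhammer ℝ k).eval a| * |a + k| ≤ (|a| + 1) ^ k * k ! * ((|a| + 1) * (k + 1)) :=
          mul_le_mul ih hstep (abs_nonneg _) (by positivity)
      _ = (|a| + 1) ^ (k + 1) * ((k + 1) * k !) := by ring

theorem pow_mul_factorial_le_ascPochhammer_eval {b : ℝ} (hb0 : 0 < b) (hb1 : b ≤ 1) (k : ℕ) :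
    b ^ k * k ! ≤ (ascPochhammer ℝ k).eval b := by
  induction k with
  | zero => simp
  | succ k ih =>
    have hstep : b * (k + 1) ≤ b + k := by nlinarith [k.cast_nonneg (α := ℝ)]
    rw [ascPochhammer_succ_eval, Nat.factorial_succ]
    push_cast
    calc b ^ (k + 1) * ((k + 1) * k !) = b ^ k * k ! * (b * (k + 1)) := by ring
      _ ≤ (ascPochhammer ℝ k).eval b * (b + k) :=
          mul_le_mul ih hstep (by positivity) (ascPochhammer_pos k b hb0).le

noncomputable def oneFOneCoeff (a b : ℝ) (k : ℕ) : ℝ :=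
  (ascPochhammer ℝ k).eval a / ((ascPochhammer ℝ k).eval b * k !)

theorem oneFOne_eq_tsum (a b : ℝ) :
    oneFOne a b = fun z => ∑' k, oneFOneCoeff a b k * z ^ k := by
  ext z
  exact tsum_congr fun k => mul_div_right_comm _ _ _

theorem abs_oneFOneCoeff_le (a : ℝ) {b : ℝ} (hb0 : 0 < b) (hb1 : b ≤ 1) (k : ℕ) :
    |oneFOneCoeff a b k| ≤ ((|a| + 1) / b) ^ k / k ! := by
  have hb := pow_mul_factorial_le_ascPochhammer_eval hb0 hb1 k
  have hden : 0 < (ascPochhammer ℝ k).eval b * k ! := by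
    have := ascPochhammer_pos k b hb0
    positivity
  rw [oneFOneCoeff, abs_div, abs_of_pos hden, div_pow,
    div_div, div_le_div_iff₀ (by positivity) (by positivity)]
  calc |(ascPochhammer ℝ k).eval a| * (b ^ k * k !)
      ≤ (|a| + 1) ^ k * k ! * (ascPochhammer ℝ k).eval b :=
        mul_le_mul (abs_ascPochhammer_eval_le a k) hb (by positivity) (by positivity)
    _ = (|a| + 1) ^ k * ((ascPochhammer ℝ k).eval b * k !) := by ring

theorem hasDerivAt_oneFOne (a : ℝ) {b : ℝ} (hb0 : 0 < b) (hb1 : b ≤ 1) (z : ℝ) :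
    HasDerivAt (oneFOne a b) (∑' k, oneFOneCoeff a b k * (k * z ^ (k - 1))) z := by
  rw [oneFOne_eq_tsum]
  exact hasDerivAt_tsum_mul_pow (abs_oneFOneCoeff_le a hb0 hb1) z

theorem two_mul_sub_one_mul_oneFOneCoeff_half (a : ℝ) (k : ℕ) :
    (2 * k - 1) * oneFOneCoeff a (1 / 2) k = -oneFOneCoeff a (-1 / 2) k := by
  have hk : (2 * k - 1 : ℝ) ≠ 0 := by
    intro h
    have : (2 * k : ℝ) = 1 := by linarith
    norm_cast at this
    omega
  have hhalf :
      (ascPochhammer ℝ k).eval (1 / 2) = -(2 * k - 1) * (ascPochhammer ℝ k).eval (-1 / 2) := by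
    have := ascPochhammer_eval_mul_eval_add_one (-1 / 2 : ℝ) k
    rw [show (-1 / 2 : ℝ) + 1 = 1 / 2 by norm_num] at this
    linear_combination -2 * this
  rw [oneFOneCoeff, oneFOneCoeff, hhalf, neg_mul, neg_mul, div_neg, mul_neg,
    mul_div_assoc', mul_assoc (2 * k - 1 : ℝ), mul_div_mul_left _ _ hk]

theorem oneFOne_lowering (a x : ℝ) :
    x * deriv (fun y => oneFOne a (1 / 2) (y ^ 2)) x - oneFOne a (1 / 2) (x ^ 2) =
      -oneFOne a (-1 / 2) (x ^ 2) := by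
  have hc := abs_oneFOneCoeff_le a (b := 1 / 2) (by norm_num) (by norm_num)
  have hderiv : HasDerivAt (fun y => oneFOne a (1 / 2) (y ^ 2)) _ x :=
    ((hasDerivAt_oneFOne a (b := 1 / 2) (by norm_num) (by norm_num) (x ^ 2)).comp x
      (hasDerivAt_pow 2 x) :)
  set c := oneFOneCoeff a (1 / 2)
  set z := x ^ 2
  have hsum := summable_mul_pow_of_abs_le hc z
  have hsum' := summable_mul_pow_of_abs_le (abs_natCast_mul_le hc) z
  calc x * deriv (fun y => oneFOne a (1 / 2) (y ^ 2)) x - oneFOne a (1 / 2) z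
      = 2 * (z * ∑' k, c k * (k * z ^ (k - 1))) - ∑' k, c k * z ^ k := by
        rw [hderiv.deriv, oneFOne_eq_tsum]
        ring
    _ = ∑' k, (2 * k - 1) * c k * z ^ k := by
        rw [mul_tsum_mul_natCast_mul_pow_sub_one, ← tsum_mul_left,
          ← (hsum'.mul_left 2).tsum_sub hsum]
        exact tsum_congr fun k => by ring
    _ = -oneFOne a (-1 / 2) z := by
        rw [oneFOne_eq_tsum, ← tsum_neg]
        exact tsum_congr fun k => by rw [two_mul_sub_one_mul_oneFOneCoeff_half, neg_mul]

/-- The lowering identity `(x d/dx - 1) ₁F₁(-n/2; 1/2; x²) = -₁F₁(-n/2; -1/2; x²)`. -/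
theorem lowering_identity_even (n : ℕ) :
    ∀ x : ℝ,
      x * deriv (fun y => oneFOne (-(n : ℝ) / 2) (1 / 2) (y ^ 2)) x
          - oneFOne (-(n : ℝ) / 2) (1 / 2) (x ^ 2) =
        -oneFOne (-(n : ℝ) / 2) (-1 / 2) (x ^ 2) :=
  oneFOne_lowering _
end
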